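/- arXiv:1501.02881 — 2 statements merged into one kernel-verified Lean document; each statement's English description precedes it below -/
import Mathlib

section
/- Let R be rotation by irrational α on S¹ with convergent denominators q_n, and suppose the subsequence n_k satisfies: n_k even, and 1 + Σ_{k=1}^ℓ 2 q_{n_k} < q_{n_ℓ + 1} for all ℓ ≥ 1. Set J'_ℓ = [Σ_{k=1}^{ℓ-1} 2{q_{n_k} α}, Σ_{k=1}^{ℓ-1} 2{q_{n_k} α} + {q_{n_ℓ} α}). Then for each ℓ > 1, the intervals R^i(J'_ℓ) for i = 0, ..., q_{n_ℓ} are pairwise disjoint, and each is disjoint from [0, {q_{n_ℓ} α}) and from [1 - {q_{n_ℓ} α}, 1). -/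
/-- The continued fraction partial quotients of `α`, via the Gauss map. -/
noncomputable def cfA (α : ℝ) : ℕ → ℤ := fun n => ⌊(fun x : ℝ => (Int.fract x)⁻¹)^[n] α⌋

/-- The denominators of the continued fraction convergents of `α`:
`q 0 = 1`, `q 1 = a 1`, `q (n+2) = a (n+2) * q (n+1) + q n`. -/
noncomputable def cfQ (α : ℝ) : ℕ → ℤ
  | 0 => 1
  | 1 => cfA α 1
  | (n+2) => cfA α (n+2) * cfQ α (n+1) + cfQ α n

/-- The numerators of the continued fraction convergents of `α`. -/
noncomputable def cfP (α : ℝ) : ℕ → ℤ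
  | 0 => cfA α 0
  | 1 => cfA α 1 * cfA α 0 + 1
  | (n+2) => cfA α (n+2) * cfP α (n+1) + cfP α n

/-!
For even `n` the fractional part `{q_n α}` is `q_n α - p_n`, the distance from `q_n α` to `ℤ`,
and by the best approximation property of convergents every `m` with `0 < |m| < q_{N+1}` has
`m α` at distance at least `|q_N α - p_N|` from `ℤ`. Take `N = n_ℓ`. The left end of `J'_ℓ` is
`M α` modulo `1` with `M = ∑_{k<ℓ} 2 q_{n_k}`, so a common point of `R^i J'_ℓ` and `R^j J'_ℓ`,
of `R^i J'_ℓ` and `[0, {q_N α})`, or of `R^i J'_ℓ` and `[1 - {q_N α}, 1)` produces such an `m`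
(namely `j - i`, `M + i`, `M + i + q_N`) whose multiple lies closer than `{q_N α}` to `ℤ`; the
growth hypothesis guarantees `|m| ≤ M + 2 q_N < q_{N+1}`.
-/

open Finset

lemma abs_mul_add_mul_eq {R : Type*} [CommRing R] [LinearOrder R] [IsStrictOrderedRing R]
    {x y a b : R} (h : 0 ≤ x * y * (a * b)) : |x * a + y * b| = |x| * |a| + |y| * |b| := by
  rw [(abs_add_eq_add_abs_iff _ _).2 ?_, abs_mul, abs_mul]
  exact mul_nonneg_iff.1 (by linear_combination h)

lemma AddCircle.coe_eq_coe_iff_exists_int {x y : ℝ} :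
    (x : AddCircle (1 : ℝ)) = y ↔ ∃ k : ℤ, x - y = k := by
  rw [QuotientAddGroup.eq_iff_sub_mem, AddSubgroup.mem_zmultiples_iff]
  simp [eq_comm]

/-- The complete quotients `x_n` of `α`. -/
noncomputable def cfX (α : ℝ) (n : ℕ) : ℝ := (fun x : ℝ => (Int.fract x)⁻¹)^[n] α

/-- `q_{n-1}`, with `q_{-1} = 0`. -/
noncomputable def cfQPrev (α : ℝ) : ℕ → ℤ
  | 0 => 0
  | n + 1 => cfQ α n

/-- `p_{n-1}`, with `p_{-1} = 1`. -/
noncomputable def cfPPrev (α : ℝ) : ℕ → ℤ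
  | 0 => 1
  | n + 1 => cfP α n

noncomputable def cfDelta (α : ℝ) (n : ℕ) : ℝ := cfQ α n * α - cfP α n

section

variable {α : ℝ}

lemma cfX_zero (α : ℝ) : cfX α 0 = α := rfl

lemma cfX_succ (α : ℝ) (n : ℕ) : cfX α (n + 1) = (Int.fract (cfX α n))⁻¹ :=
  Function.iterate_succ_apply' _ _ _

lemma cfA_eq_floor_cfX (α : ℝ) (n : ℕ) : cfA α n = ⌊cfX α n⌋ := rfl

lemma cfQ_succ (α : ℝ) (n : ℕ) : cfQ α (n + 1) = cfA α (n + 1) * cfQ α n + cfQPrev α n := by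
  cases n <;> simp [cfQ, cfQPrev]

lemma cfP_succ (α : ℝ) (n : ℕ) : cfP α (n + 1) = cfA α (n + 1) * cfP α n + cfPPrev α n := by
  cases n <;> simp [cfP, cfPPrev]

lemma cfP_mul_cfQPrev_sub (α : ℝ) (n : ℕ) :
    cfP α n * cfQPrev α n - cfPPrev α n * cfQ α n = (-1) ^ (n + 1) := by
  induction n with
  | zero => simp [cfQPrev, cfPPrev, cfQ]
  | succ n ih =>
    rw [cfP_succ, cfQ_succ, pow_succ, ← ih]
    simp only [cfQPrev, cfPPrev]
    ring

lemma Irrational.cfX (hα : Irrational α) (n : ℕ) : Irrational (cfX α n) := by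
  induction n with
  | zero => exact hα
  | succ n ih => rw [cfX_succ]; exact (ih.sub_intCast _).inv

lemma fract_cfX_pos (hα : Irrational α) (n : ℕ) : 0 < Int.fract (cfX α n) := by
  refine (Int.fract_nonneg _).lt_of_ne' ?_
  rw [← Int.self_sub_floor]
  exact ((hα.cfX n).sub_intCast _).ne_zero

lemma one_lt_cfX_succ (hα : Irrational α) (n : ℕ) : 1 < cfX α (n + 1) := by
  rw [cfX_succ, one_lt_inv_iff₀]
  exact ⟨fract_cfX_pos hα n, Int.fract_lt_one _⟩

lemma cfX_mul_cfX_succ (hα : Irrational α) (n : ℕ) :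
    cfX α n * cfX α (n + 1) = cfA α n * cfX α (n + 1) + 1 := by
  have := (fract_cfX_pos hα n).ne'
  rw [cfX_succ, cfA_eq_floor_cfX, ← Int.self_sub_floor] at *
  field_simp
  ring

lemma one_le_cfA_succ (hα : Irrational α) (n : ℕ) : 1 ≤ cfA α (n + 1) :=
  Int.le_floor.2 (by exact_mod_cast (one_lt_cfX_succ hα n).le)

lemma one_le_cfQ (hα : Irrational α) (n : ℕ) : 1 ≤ cfQ α n := by
  induction n using Nat.strong_induction_on with
  | _ n ih =>
    match n with
    | 0 => simp [cfQ]
    | 1 => exact one_le_cfA_succ hα 0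
    | n + 2 =>
      rw [cfQ_succ, cfQPrev]
      nlinarith [ih (n + 1) (by omega), ih n (by omega), one_le_cfA_succ hα (n + 1)]

lemma cfQPrev_nonneg (hα : Irrational α) (n : ℕ) : 0 ≤ cfQPrev α n := by
  cases n with
  | zero => rfl
  | succ n => exact zero_le_one.trans (one_le_cfQ hα n)

lemma mul_cfQ_mul_cfX_add (hα : Irrational α) (n : ℕ) :
    α * (cfQ α n * cfX α (n + 1) + cfQPrev α n) = cfP α n * cfX α (n + 1) + cfPPrev α n := by
  induction n with
  | zero =>
    simpa [cfQ, cfP, cfQPrev, cfPPrev, cfX_zero] using cfX_mul_cfX_succ hα 0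
  | succ n ih =>
    have hq := congrArg (fun z : ℤ => (z : ℝ)) (cfQ_succ α n)
    have hp := congrArg (fun z : ℤ => (z : ℝ)) (cfP_succ α n)
    push_cast at hq hp
    simp only [cfQPrev, cfPPrev]
    rw [hq, hp]
    linear_combination cfX α (n + 2) * ih +
      (cfP α n - α * cfQ α n) * cfX_mul_cfX_succ hα (n + 1)

lemma neg_one_pow_mul_cfDelta_mul (hα : Irrational α) (n : ℕ) :
    (-1) ^ n * cfDelta α n * (cfQ α n * cfX α (n + 1) + cfQPrev α n) = 1 := by
  have hdet := congrArg (fun z : ℤ => (z : ℝ)) (cfP_mul_cfQPrev_sub α n)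
  push_cast at hdet
  have hsq : ((-1 : ℝ) ^ n) ^ 2 = 1 := by rw [← pow_mul, mul_comm, pow_mul]; norm_num
  unfold cfDelta
  linear_combination (-1 : ℝ) ^ n * cfQ α n * mul_cfQ_mul_cfX_add hα n - (-1 : ℝ) ^ n * hdet + hsq

lemma one_lt_cfQ_mul_cfX_add (hα : Irrational α) (n : ℕ) :
    1 < cfQ α n * cfX α (n + 1) + cfQPrev α n := by
  have hq : (1 : ℝ) ≤ cfQ α n := by exact_mod_cast one_le_cfQ hα n
  have hq' : (0 : ℝ) ≤ cfQPrev α n := by exact_mod_cast cfQPrev_nonneg hα n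
  nlinarith [one_lt_cfX_succ hα n]

lemma neg_one_pow_mul_cfDelta_pos (hα : Irrational α) (n : ℕ) : 0 < (-1) ^ n * cfDelta α n :=
  pos_of_mul_pos_left (by rw [neg_one_pow_mul_cfDelta_mul hα]; exact one_pos)
    (by linarith [one_lt_cfQ_mul_cfX_add hα n])

lemma neg_one_pow_mul_cfDelta_lt_one (hα : Irrational α) (n : ℕ) :
    (-1) ^ n * cfDelta α n < 1 := by
  have := neg_one_pow_mul_cfDelta_mul hα n
  nlinarith [one_lt_cfQ_mul_cfX_add hα n, neg_one_pow_mul_cfDelta_pos hα n]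

lemma cfDelta_mul_cfDelta_succ_nonpos (hα : Irrational α) (n : ℕ) :
    cfDelta α n * cfDelta α (n + 1) ≤ 0 := by
  have h := mul_pos (neg_one_pow_mul_cfDelta_pos hα n) (neg_one_pow_mul_cfDelta_pos hα (n + 1))
  have hsq : ((-1 : ℝ) ^ n) ^ 2 = 1 := by rw [← pow_mul, mul_comm, pow_mul]; norm_num
  have hprod : (-1) ^ n * cfDelta α n * ((-1) ^ (n + 1) * cfDelta α (n + 1)) =
      -(cfDelta α n * cfDelta α (n + 1)) := by
    rw [pow_succ]
    linear_combination (-(cfDelta α n * cfDelta α (n + 1))) * hsq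
  linarith

lemma fract_cfQ_mul_of_even (hα : Irrational α) {n : ℕ} (hn : Even n) :
    Int.fract (cfQ α n * α) = |cfDelta α n| := by
  have hpos := neg_one_pow_mul_cfDelta_pos hα n
  have hlt := neg_one_pow_mul_cfDelta_lt_one hα n
  rw [hn.neg_one_pow, one_mul] at hpos hlt
  rw [abs_of_pos hpos, Int.fract_eq_iff]
  exact ⟨hpos.le, hlt, cfP α n, by unfold cfDelta; ring⟩

/-- Best approximation property of the convergents. -/
theorem abs_cfDelta_le_abs_mul_sub (hα : Irrational α) {N : ℕ} {m : ℤ} (hm0 : m ≠ 0)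
    (hm : |m| < cfQ α (N + 1)) (p : ℤ) : |cfDelta α N| ≤ |m * α - p| := by
  have hdet := cfP_mul_cfQPrev_sub α (N + 1)
  simp only [cfQPrev, cfPPrev] at hdet
  have hsq : ((-1 : ℤ) ^ N) * (-1) ^ N = 1 := by rw [← pow_add, ← two_mul, pow_mul]; norm_num
  -- `(x, y)` solves `x (q_{N+1}, p_{N+1}) + y (q_N, p_N) = (m, p)`; the system is unimodular
  set x : ℤ := -(-1) ^ N * (m * cfP α N - p * cfQ α N)
  set y : ℤ := -(-1) ^ N * (p * cfQ α (N + 1) - m * cfP α (N + 1))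
  have hxm : x * cfQ α (N + 1) + y * cfQ α N = m := by
    linear_combination (-1) ^ N * m * hdet + m * hsq
  have hyp : x * cfP α (N + 1) + y * cfP α N = p := by
    linear_combination (-1) ^ N * p * hdet + p * hsq
  have hsplit : m * α - p = x * cfDelta α (N + 1) + y * cfDelta α N := by
    have hxm' := congrArg (fun z : ℤ => (z : ℝ)) hxm
    have hyp' := congrArg (fun z : ℤ => (z : ℝ)) hyp
    push_cast at hxm' hyp'
    unfold cfDelta
    linear_combination hyp' - α * hxm'
  -- `cfDelta α N` and `cfDelta α (N + 1)` have opposite signs, so for `x y ≤ 0` the two terms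
  -- cannot cancel; for `x y > 0` or `y = 0` the first identity forces `|m| ≥ q_{N+1}`.
  by_cases hxy : x * y ≤ 0 ∧ y ≠ 0
  · have hδ := cfDelta_mul_cfDelta_succ_nonpos hα N
    have hxyR : (x : ℝ) * y ≤ 0 := by exact_mod_cast hxy.1
    have hy : (1 : ℝ) ≤ |(y : ℝ)| := by exact_mod_cast Int.one_le_abs hxy.2
    rw [hsplit, abs_mul_add_mul_eq (by nlinarith)]
    nlinarith [abs_nonneg (x : ℝ), abs_nonneg (cfDelta α (N + 1)), abs_nonneg (cfDelta α N)]
  · exfalso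
    have hq1 := one_le_cfQ hα (N + 1)
    have hq := one_le_cfQ hα N
    have hxy' : 0 ≤ x * y := by
      rcases not_and_or.1 hxy with h | h
      · exact (not_le.1 h).le
      · simp [not_not.1 h]
    have hx : x ≠ 0 := by
      intro hx0
      have hy0 : y = 0 := by_contra fun hy => hxy ⟨by simp [hx0], hy⟩
      rw [hx0, hy0] at hxm
      exact hm0 (by simpa using hxm.symm)
    have := abs_mul_add_mul_eq (x := x) (y := y) (a := cfQ α (N + 1)) (b := cfQ α N)
      (mul_nonneg hxy' (mul_nonneg (by omega) (by omega)))
    rw [hxm, abs_of_pos (by omega : 0 < cfQ α (N + 1)), abs_of_pos (by omega : 0 < cfQ α N)] at this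
    nlinarith [Int.one_le_abs hx, abs_nonneg y]

lemma exists_sum_two_mul_fract_eq {ι : Type*} (S : Finset ι) (f : ι → ℤ) (x : ℝ) :
    ∃ P : ℤ, ∑ k ∈ S, 2 * Int.fract (f k * x) = ((∑ k ∈ S, 2 * f k : ℤ) : ℝ) * x - P := by
  refine ⟨∑ k ∈ S, 2 * ⌊(f k : ℝ) * x⌋, ?_⟩
  push_cast
  rw [Finset.sum_mul, ← Finset.sum_sub_distrib]
  refine Finset.sum_congr rfl fun k _ => ?_
  rw [← Int.self_sub_floor]
  ring

end

theorem coe_add_mul_ne_coe_add_mul_of_mem_Ico {α : ℝ} (hα : Irrational α) {N : ℕ} {i j : ℤ}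
    (hij : i ≠ j) (hq : |j - i| < cfQ α (N + 1)) {a u v : ℝ}
    (hu : u ∈ Set.Ico a (a + |cfDelta α N|)) (hv : v ∈ Set.Ico a (a + |cfDelta α N|)) :
    (↑(u + i * α) : AddCircle (1 : ℝ)) ≠ ↑(v + j * α) := by
  intro h
  obtain ⟨k, hk⟩ := AddCircle.coe_eq_coe_iff_exists_int.1 h
  have hbest := abs_cfDelta_le_abs_mul_sub hα (sub_ne_zero.2 hij.symm) hq (-k)
  have hdiff : ((j - i : ℤ) : ℝ) * α - ((-k : ℤ) : ℝ) = u - v := by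
    push_cast
    linear_combination -hk
  rw [hdiff] at hbest
  rw [Set.mem_Ico] at hu hv
  exact (abs_sub_lt_iff.2 ⟨by linarith, by linarith⟩).not_ge hbest

theorem disjoint_image_coe_add_mul_Ico {α : ℝ} (hα : Irrational α) {N : ℕ} {i j : ℤ}
    (hij : i ≠ j) (hq : |j - i| < cfQ α (N + 1)) (a : ℝ) :
    Disjoint ((fun t : ℝ => (↑(t + i * α) : AddCircle (1 : ℝ))) '' Set.Ico a (a + |cfDelta α N|))
      ((fun t : ℝ => (↑(t + j * α) : AddCircle (1 : ℝ))) '' Set.Ico a (a + |cfDelta α N|)) := by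
  rw [Set.disjoint_left]
  rintro _ ⟨u, hu, rfl⟩ ⟨v, hv, h⟩
  exact coe_add_mul_ne_coe_add_mul_of_mem_Ico hα hij hq hu hv h.symm

theorem disjoint_image_coe_add_mul_Ico_coe_Ico_union {α : ℝ} (hα : Irrational α) {N : ℕ}
    (hN : Even N) {M i : ℤ} (hi : 0 < M + i) (hq : M + i + cfQ α N < cfQ α (N + 1)) {a : ℝ}
    (ha : ∃ P : ℤ, a = M * α - P) :
    Disjoint ((fun t : ℝ => (↑(t + i * α) : AddCircle (1 : ℝ))) '' Set.Ico a (a + |cfDelta α N|))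
      ((fun t : ℝ => (↑t : AddCircle (1 : ℝ))) ''
        (Set.Ico 0 |cfDelta α N| ∪ Set.Ico (1 - |cfDelta α N|) 1)) := by
  obtain ⟨P, rfl⟩ := ha
  have hδ : |cfDelta α N| = cfQ α N * α - ⌊(cfQ α N : ℝ) * α⌋ := by
    rw [← fract_cfQ_mul_of_even hα hN, Int.self_sub_floor]
  have hq0 := one_le_cfQ hα N
  rw [Set.disjoint_left]
  rintro _ ⟨u, hu, rfl⟩ ⟨v, hv, h⟩
  obtain ⟨k, hk⟩ := AddCircle.coe_eq_coe_iff_exists_int.1 h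
  rw [Set.mem_Ico] at hu
  have hu' : u - (M * α - P) ∈ Set.Ico 0 (0 + |cfDelta α N|) := ⟨by linarith, by linarith⟩
  rcases hv with hv | hv
  · refine coe_add_mul_ne_coe_add_mul_of_mem_Ico hα (i := M + i) (j := 0) hi.ne'
      (by rw [abs_lt]; omega) hu' (by simpa using hv)
      (AddCircle.coe_eq_coe_iff_exists_int.2 ⟨P - k, ?_⟩)
    push_cast
    linear_combination -hk
  · have hv' : v - (1 - |cfDelta α N|) ∈ Set.Ico 0 (0 + |cfDelta α N|) := by
      rw [Set.mem_Ico] at hv ⊢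
      constructor <;> linarith
    refine coe_add_mul_ne_coe_add_mul_of_mem_Ico hα (i := M + i) (j := -cfQ α N) (by omega)
      (by rw [abs_lt]; omega) hu' hv'
      (AddCircle.coe_eq_coe_iff_exists_int.2 ⟨P - k + 1 + ⌊(cfQ α N : ℝ) * α⌋, ?_⟩)
    push_cast
    linear_combination -hk - hδ

theorem Jprime_orbit_disjoint_general (α : ℝ) (hirr : Irrational α)
    (nseq : ℕ → ℕ) (heven : ∀ k, 1 ≤ k → Even (nseq k))
    (hA3 : ∀ l, 1 ≤ l →
      1 + ∑ k ∈ Finset.Icc 1 l, 2 * cfQ α (nseq k) < cfQ α (nseq l + 1))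
    (l : ℕ) (hl : 1 < l) :
    (∀ i j : ℕ, (i : ℤ) ≤ cfQ α (nseq l) → (j : ℤ) ≤ cfQ α (nseq l) → i ≠ j →
      Disjoint
        ((fun t : ℝ => (↑(t + (i : ℝ) * α) : AddCircle (1 : ℝ))) ''
          Set.Ico (∑ k ∈ Finset.Icc 1 (l - 1), 2 * Int.fract ((cfQ α (nseq k) : ℝ) * α))
            ((∑ k ∈ Finset.Icc 1 (l - 1), 2 * Int.fract ((cfQ α (nseq k) : ℝ) * α)) +
              Int.fract ((cfQ α (nseq l) : ℝ) * α)))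
        ((fun t : ℝ => (↑(t + (j : ℝ) * α) : AddCircle (1 : ℝ))) ''
          Set.Ico (∑ k ∈ Finset.Icc 1 (l - 1), 2 * Int.fract ((cfQ α (nseq k) : ℝ) * α))
            ((∑ k ∈ Finset.Icc 1 (l - 1), 2 * Int.fract ((cfQ α (nseq k) : ℝ) * α)) +
              Int.fract ((cfQ α (nseq l) : ℝ) * α)))) ∧
    (∀ i : ℕ, (i : ℤ) ≤ cfQ α (nseq l) →
      Disjoint
        ((fun t : ℝ => (↑(t + (i : ℝ) * α) : AddCircle (1 : ℝ))) ''
          Set.Ico (∑ k ∈ Finset.Icc 1 (l - 1), 2 * Int.fract ((cfQ α (nseq k) : ℝ) * α))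
            ((∑ k ∈ Finset.Icc 1 (l - 1), 2 * Int.fract ((cfQ α (nseq k) : ℝ) * α)) +
              Int.fract ((cfQ α (nseq l) : ℝ) * α)))
        ((fun t : ℝ => (↑t : AddCircle (1 : ℝ))) ''
          (Set.Ico 0 (Int.fract ((cfQ α (nseq l) : ℝ) * α)) ∪
            Set.Ico (1 - Int.fract ((cfQ α (nseq l) : ℝ) * α)) 1))) := by
  obtain ⟨P, hs⟩ := exists_sum_two_mul_fract_eq (Icc 1 (l - 1)) (fun k => cfQ α (nseq k)) α
  have hM : 0 < ∑ k ∈ Icc 1 (l - 1), 2 * cfQ α (nseq k) :=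
    Finset.sum_pos (fun k _ => by linarith [one_le_cfQ hirr (nseq k)])
      ⟨1, Finset.mem_Icc.2 ⟨le_rfl, by omega⟩⟩
  have hbound : 1 + (∑ k ∈ Icc 1 (l - 1), 2 * cfQ α (nseq k) + 2 * cfQ α (nseq l)) <
      cfQ α (nseq l + 1) := by
    have h := hA3 l hl.le
    rwa [← Nat.sub_add_cancel hl.le, Finset.sum_Icc_succ_top (by omega),
      Nat.sub_add_cancel hl.le] at h
  rw [fract_cfQ_mul_of_even hirr (heven l hl.le)]
  refine ⟨fun i j hi hj hij => ?_, fun i hi => ?_⟩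
  · exact_mod_cast disjoint_image_coe_add_mul_Ico hirr (Int.ofNat_inj.not.2 hij)
      (by rw [abs_lt]; omega) _
  · exact_mod_cast disjoint_image_coe_add_mul_Ico_coe_Ico_union hirr (heven l hl.le)
      (by omega) (by omega) ⟨P, hs⟩

/-- Disjointness of the intervals `R^i(J'_ℓ)`, `i = 0, …, q_{n_ℓ}`, from each other and from
`[0, {q_{n_ℓ} α})` and `[1 - {q_{n_ℓ} α}, 1)`. -/
theorem Jprime_orbit_disjoint (α : ℝ) (hirr : Irrational α) (hpos : 0 < α)
    (nseq : ℕ → ℕ) (heven : ∀ k, 1 ≤ k → Even (nseq k))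
    (hA3 : ∀ l, 1 ≤ l →
      1 + ∑ k ∈ Finset.Icc 1 l, 2 * cfQ α (nseq k) < cfQ α (nseq l + 1))
    (l : ℕ) (hl : 1 < l) :
    (∀ i j : ℕ, (i : ℤ) ≤ cfQ α (nseq l) → (j : ℤ) ≤ cfQ α (nseq l) → i ≠ j →
      Disjoint
        ((fun t : ℝ => (↑(t + (i : ℝ) * α) : AddCircle (1 : ℝ))) ''
          Set.Ico (∑ k ∈ Finset.Icc 1 (l - 1), 2 * Int.fract ((cfQ α (nseq k) : ℝ) * α))
            ((∑ k ∈ Finset.Icc 1 (l - 1), 2 * Int.fract ((cfQ α (nseq k) : ℝ) * α)) +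
              Int.fract ((cfQ α (nseq l) : ℝ) * α)))
        ((fun t : ℝ => (↑(t + (j : ℝ) * α) : AddCircle (1 : ℝ))) ''
          Set.Ico (∑ k ∈ Finset.Icc 1 (l - 1), 2 * Int.fract ((cfQ α (nseq k) : ℝ) * α))
            ((∑ k ∈ Finset.Icc 1 (l - 1), 2 * Int.fract ((cfQ α (nseq k) : ℝ) * α)) +
              Int.fract ((cfQ α (nseq l) : ℝ) * α)))) ∧
    (∀ i : ℕ, (i : ℤ) ≤ cfQ α (nseq l) →
      Disjoint
        ((fun t : ℝ => (↑(t + (i : ℝ) * α) : AddCircle (1 : ℝ))) ''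
          Set.Ico (∑ k ∈ Finset.Icc 1 (l - 1), 2 * Int.fract ((cfQ α (nseq k) : ℝ) * α))
            ((∑ k ∈ Finset.Icc 1 (l - 1), 2 * Int.fract ((cfQ α (nseq k) : ℝ) * α)) +
              Int.fract ((cfQ α (nseq l) : ℝ) * α)))
        ((fun t : ℝ => (↑t : AddCircle (1 : ℝ))) ''
          (Set.Ico 0 (Int.fract ((cfQ α (nseq l) : ℝ) * α)) ∪
            Set.Ico (1 - Int.fract ((cfQ α (nseq l) : ℝ) * α)) 1))) :=
  Jprime_orbit_disjoint_general α hirr nseq heven hA3 l hl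
end

section
/- Let α satisfy: q_{n+1} ≤ (a_{n+1} + 1) q_n for all n, and all a_i ≥ 2 with a_{n_k+1} = k + 8 along a sparse sequence n_k with n_k = 10^{k²} n_{k-1}, n_1 = 10, and a_i = 2 off the sequence {n_k + 1}. Then Σ_{i=1}^{n+1} a_i = O(log q_n) as n → ∞. -/
/-!
Every partial quotient is at least `2`, so `q_n ≥ 2^n` and `log q_n ≥ n log 2`. On the other
hand `a_i` exceeds `2` only at the indices `n_k + 1`, and `n_k ≥ k²`, so the indices up to
`n + 1` carry at most `√n` exceptional quotients, each at most `√n + 8`. Hence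
`∑_{i ≤ n+1} a_i ≤ 2(n + 1) + 7n = O(n)`.
-/

open Finset

theorem sq_le_of_eq_pow_sq_mul {b : ℕ} (hb : 1 < b) {s : ℕ → ℕ} (hs1 : 1 ≤ s 1)
    (hrec : ∀ k, 2 ≤ k → s k = b ^ (k ^ 2) * s (k - 1)) :
    ∀ k, 1 ≤ k → k ^ 2 ≤ s k := by
  intro k hk
  induction k, hk using Nat.le_induction with
  | base => simpa using hs1
  | succ k hk ih =>
    have hsk : 1 ≤ s k := le_trans (Nat.one_le_pow _ _ hk) ih
    calc (k + 1) ^ 2 ≤ b ^ ((k + 1) ^ 2) := (Nat.lt_pow_self hb).le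
      _ ≤ b ^ ((k + 1) ^ 2) * s k := Nat.le_mul_of_pos_right _ hsk
      _ = s (k + 1) := (hrec (k + 1) (by omega)).symm

theorem pow_le_of_denom_recurrence {c : ℕ} (a q : ℕ → ℕ) (hc : ∀ i, c ≤ a i)
    (hq0 : q 0 = 1) (hq1 : q 1 = a 1) (hqrec : ∀ n, q (n + 2) = a (n + 2) * q (n + 1) + q n) :
    ∀ n, c ^ n ≤ q n
  | 0 => by simp [hq0]
  | 1 => by simpa [hq1] using hc 1
  | n + 2 =>
    calc c ^ (n + 2) = c * c ^ (n + 1) := by ring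
      _ ≤ a (n + 2) * q (n + 1) :=
        Nat.mul_le_mul (hc _) (pow_le_of_denom_recurrence a q hc hq0 hq1 hqrec (n + 1))
      _ ≤ q (n + 2) := hqrec n ▸ Nat.le_add_right _ _

section SparseExceptions

variable {s a : ℕ → ℕ} (hs : ∀ k, 1 ≤ k → k ^ 2 ≤ s k)
  (ha_on : ∀ k, 1 ≤ k → a (s k + 1) ≤ k + 8)
  (ha_off : ∀ i, (∀ k, 1 ≤ k → i ≠ s k + 1) → a i ≤ 2)
include hs ha_on ha_off

theorem sum_Icc_tsub_two_le (n : ℕ) : ∑ i ∈ Icc 1 (n + 1), (a i - 2) ≤ 7 * n := by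
  set m := Nat.sqrt n
  have hsupp : ∀ i ∈ Icc 1 (n + 1), a i - 2 ≠ 0 → i ∈ (Icc 1 m).image (s · + 1) := by
    intro i hi hai
    by_contra hnot
    refine hai (Nat.sub_eq_zero_of_le (ha_off i fun k hk hik => hnot ?_))
    have hkn : k ^ 2 ≤ n := (hs k hk).trans (by simp only [mem_Icc] at hi; omega)
    exact mem_image.2 ⟨k, mem_Icc.2 ⟨hk, Nat.le_sqrt'.2 hkn⟩, hik.symm⟩
  calc ∑ i ∈ Icc 1 (n + 1), (a i - 2)
      ≤ ∑ i ∈ (Icc 1 m).image (s · + 1), (a i - 2) := sum_le_sum_of_ne_zero hsupp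
    _ ≤ ∑ k ∈ Icc 1 m, (a (s k + 1) - 2) := sum_image_le_of_nonneg fun _ _ => Nat.zero_le _
    _ ≤ ∑ _k ∈ Icc 1 m, (m + 6) := sum_le_sum fun k hk => by
        have := ha_on k (mem_Icc.1 hk).1
        have := (mem_Icc.1 hk).2
        omega
    _ = m * (m + 6) := by simp
    _ ≤ 7 * n := by nlinarith [Nat.sqrt_le' n, Nat.sqrt_le_self n]

theorem sum_Icc_le (n : ℕ) : ∑ i ∈ Icc 1 (n + 1), a i ≤ 9 * n + 2 :=
  calc ∑ i ∈ Icc 1 (n + 1), a i ≤ ∑ i ∈ Icc 1 (n + 1), ((a i - 2) + 2) :=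
        sum_le_sum fun _ _ => le_tsub_add
    _ = ∑ i ∈ Icc 1 (n + 1), (a i - 2) + 2 * (n + 1) := by simp [sum_add_distrib, mul_comm]
    _ ≤ 9 * n + 2 := by linarith [sum_Icc_tsub_two_le hs ha_on ha_off n]

end SparseExceptions

theorem sum_partial_quotients_big_O_general (nseq : ℕ → ℕ) (hn1 : nseq 1 = 10)
    (hnrec : ∀ k, 2 ≤ k → nseq k = 10 ^ (k ^ 2) * nseq (k - 1))
    (a : ℕ → ℕ)
    (ha_on : ∀ k, 1 ≤ k → a (nseq k + 1) = k + 8)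
    (ha_off : ∀ i, (∀ k, 1 ≤ k → i ≠ nseq k + 1) → a i = 2)
    (q : ℕ → ℕ) (hq0 : q 0 = 1) (hq1 : q 1 = a 1)
    (hqrec : ∀ n, q (n + 2) = a (n + 2) * q (n + 1) + q n) :
    ∃ M : ℝ, 0 < M ∧ ∀ n, 2 ≤ n →
      (∑ i ∈ Finset.Icc 1 (n + 1), (a i : ℝ)) ≤ M * Real.log (q n) := by
  have ha2 : ∀ i, 2 ≤ a i := by
    intro i
    by_cases h : ∀ k, 1 ≤ k → i ≠ nseq k + 1
    · exact (ha_off i h).ge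
    · push Not at h
      obtain ⟨k, hk, rfl⟩ := h
      rw [ha_on k hk]
      omega
  have hs := sq_le_of_eq_pow_sq_mul (by norm_num) (by omega) hnrec
  have hsum := sum_Icc_le hs (fun k hk => (ha_on k hk).le) (fun i hi => (ha_off i hi).le)
  have hq : ∀ n, (2 : ℝ) ^ n ≤ q n := fun n => by
    exact_mod_cast pow_le_of_denom_recurrence a q ha2 hq0 hq1 hqrec n
  refine ⟨10 / Real.log 2, by positivity, fun n hn => ?_⟩
  calc ∑ i ∈ Icc 1 (n + 1), (a i : ℝ) ≤ 10 * n := by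
        exact_mod_cast (hsum n).trans (by omega)
    _ = 10 / Real.log 2 * Real.log (2 ^ n) := by
        rw [Real.log_pow]; field_simp
    _ ≤ 10 / Real.log 2 * Real.log (q n) := by
        gcongr
        exact hq n

/-- For the specific continued fraction (`a_i = 2` off the sparse sequence `{n_k + 1}`,
`a_{n_k+1} = k + 8`), one has `∑_{i=1}^{n+1} a_i = O(log q_n)`. -/
theorem sum_partial_quotients_big_O (nseq : ℕ → ℕ) (hn1 : nseq 1 = 10)
    (hnrec : ∀ k, 2 ≤ k → nseq k = 10 ^ (k ^ 2) * nseq (k - 1))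
    (a : ℕ → ℕ)
    (ha_on : ∀ k, 1 ≤ k → a (nseq k + 1) = k + 8)
    (ha_off : ∀ i, (∀ k, 1 ≤ k → i ≠ nseq k + 1) → a i = 2)
    (q : ℕ → ℕ) (hq0 : q 0 = 1) (hq1 : q 1 = a 1)
    (hqrec : ∀ n, q (n + 2) = a (n + 2) * q (n + 1) + q n)
    (hqbound : ∀ n, q (n + 1) ≤ (a (n + 1) + 1) * q n) :
    ∃ M : ℝ, 0 < M ∧ ∀ n, 2 ≤ n →
      (∑ i ∈ Finset.Icc 1 (n + 1), (a i : ℝ)) ≤ M * Real.log (q n) :=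
  sum_partial_quotients_big_O_general nseq hn1 hnrec a ha_on ha_off q hq0 hq1 hqrec
end
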